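/- arXiv:1201.2878 — 2 statements merged into one kernel-verified Lean document; each statement's English description precedes it below -/
import Mathlib

section
/- Let V be a finite-dimensional real inner product space, and let a, s : V × V → ℝ be symmetric bilinear forms with a coercive and s positive semidefinite. Let F : V → ℝ be linear, and for σ > 0 let u_σ ∈ V be the unique solution of a(u_σ, v) + σ s(u_σ, v) = F(v) for all v ∈ V. Let W = {v ∈ V : s(v,v) = 0} and let u_∞ ∈ W solve a(u_∞, w) = F(w) for all w ∈ W. Then u_σ → u_∞ as σ → ∞. -/
open Filter

/-!
Write `e = u_σ - u_∞`. Since `s(u_∞, ·) = 0` and `u_∞` solves the constrained problem, `e` solves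
`a(e, ·) + σ s(e, ·) = G` with `G = F - a(u_∞, ·)` vanishing on the null space of `s`. In finite
dimension such a `G` lies in the range of `s`, say `G = s(·, g)`, and then Cauchy–Schwarz for `s`
gives `a(e, e) ≤ s(g, g) / σ`; coercivity turns this into `‖e‖² ≤ s(g, g) / (α σ)`.
-/

namespace LinearMap

theorem exists_eq_apply_right_of_ker_le_ker {K V : Type*} [Field K] [AddCommGroup V] [Module K V]
    [FiniteDimensional K V] {B : V →ₗ[K] V →ₗ[K] K} {G : Module.Dual K V}
    (hG : ker B ≤ ker G) : ∃ g, ∀ v, G v = B v g := by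
  have hG_range : G ∈ range B.flip := by
    rw [← dualAnnihilator_ker_eq_range_flip, Submodule.mem_dualAnnihilator]
    exact fun v hv => hG hv
  obtain ⟨g, rfl⟩ := hG_range
  exact ⟨g, fun _ => rfl⟩

theorem apply_self_le_div_of_penalized {V : Type*} [AddCommGroup V] [Module ℝ V]
    {a s : V →ₗ[ℝ] V →ₗ[ℝ] ℝ} (ha_pos : ∀ v, 0 ≤ a v v) (hs_symm : s.IsSymm)
    (hs_pos : ∀ v, 0 ≤ s v v) {σ : ℝ} (hσ : 0 < σ) {e g : V}
    (he : ∀ v, a e v + σ * s e v = s v g) : a e e ≤ s g g / σ := by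
  have hy : a e e + σ * s e e = s e g := he e
  have hcs : s e g ^ 2 ≤ s e e * s g g := BilinForm.apply_sq_le_of_symm s hs_pos hs_symm e g
  have hs_ee := hs_pos e
  have ha_ee := ha_pos e
  have hs_gg := hs_pos g
  rw [le_div_iff₀ hσ]
  rcases (show 0 ≤ s e g by nlinarith).eq_or_lt with hy_zero | hy_pos
  · nlinarith [mul_nonneg hσ.le hs_ee]
  · -- `σ y² ≤ σ s(e,e) s(g,g) ≤ y s(g,g)` for `y = s(e,g) > 0`, hence `σ y ≤ s(g,g)`.
    have hσy : σ * s e g ≤ s g g := le_of_mul_le_mul_right (by nlinarith) hy_pos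
    nlinarith

end LinearMap

theorem tendsto_of_sq_norm_sub_le_div {E : Type*} [SeminormedAddCommGroup E] {f : ℝ → E} {x : E}
    {C : ℝ} (h : ∀ σ > 0, ‖f σ - x‖ ^ 2 ≤ C / σ) : Tendsto f atTop (nhds x) := by
  rw [tendsto_iff_norm_sub_tendsto_zero]
  have hsq : Tendsto (fun σ => ‖f σ - x‖ ^ 2) atTop (nhds 0) :=
    squeeze_zero' (Eventually.of_forall fun _ => sq_nonneg _)
      (eventually_gt_atTop 0 |>.mono h) (tendsto_const_nhds.div_atTop tendsto_id)
  simpa [Real.sqrt_sq (norm_nonneg _)] using hsq.sqrt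

theorem stmt8_general (V : Type*) [NormedAddCommGroup V] [InnerProductSpace ℝ V]
    [FiniteDimensional ℝ V]
    (a s : V →ₗ[ℝ] V →ₗ[ℝ] ℝ)
    (hs_symm : ∀ x y : V, s x y = s y x)
    (α : ℝ) (hα : 0 < α) (hcoer : ∀ v : V, α * ‖v‖ ^ 2 ≤ a v v)
    (hs_pos : ∀ v : V, 0 ≤ s v v)
    (F : V →ₗ[ℝ] ℝ)
    (W : Submodule ℝ V) (hW : ∀ v : V, v ∈ W ↔ s v v = 0)
    (uσ : ℝ → V)
    (huσ : ∀ σ : ℝ, 0 < σ → ∀ v : V, a (uσ σ) v + σ * s (uσ σ) v = F v)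
    (uInf : V) (huInfW : uInf ∈ W)
    (huInf : ∀ w ∈ W, a uInf w = F w) :
    Tendsto uσ atTop (nhds uInf) := by
  have hs : s.IsSymm := ⟨hs_symm⟩
  have hsInf : s uInf = 0 :=
    (LinearMap.BilinForm.apply_apply_same_eq_zero_iff s hs_pos hs).1 ((hW uInf).1 huInfW)
  obtain ⟨g, hg⟩ : ∃ g, ∀ v, (F - a uInf) v = s v g :=
    LinearMap.exists_eq_apply_right_of_ker_le_ker fun v hv => by
      have hvW : v ∈ W := (hW v).2 (by rw [LinearMap.mem_ker.1 hv, LinearMap.zero_apply])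
      simp [huInf v hvW]
  have ha_pos (v : V) : 0 ≤ a v v := le_trans (by positivity) (hcoer v)
  refine tendsto_of_sq_norm_sub_le_div (C := s g g / α) fun σ hσ => ?_
  have herr : ∀ v, a (uσ σ - uInf) v + σ * s (uσ σ - uInf) v = s v g := fun v => by
    simp only [map_sub, LinearMap.sub_apply, hsInf, sub_zero, ← hg, ← huσ σ hσ v]
    ring
  have herr_energy := LinearMap.apply_self_le_div_of_penalized ha_pos hs hs_pos hσ herr
  rw [div_right_comm, le_div_iff₀ hα]
  linarith [hcoer (uσ σ - uInf)]

/-- Abstract version of Theorem 1 of the paper (super-penalization limit):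
in a finite-dimensional inner product space `V`, with `a` a symmetric coercive
bilinear form, `s` a symmetric positive semidefinite penalty form with kernel
the subspace `W` (the cdG space), `F` a linear load functional, `uσ σ` the
solution of the penalized problem `a(uσ,·) + σ s(uσ,·) = F` and `uInf ∈ W` the
constrained (cdG) solution, we have `uσ → uInf` as `σ → ∞`. -/
theorem stmt8 (V : Type*) [NormedAddCommGroup V] [InnerProductSpace ℝ V]
    [FiniteDimensional ℝ V]
    (a s : V →ₗ[ℝ] V →ₗ[ℝ] ℝ)
    (ha_symm : ∀ x y : V, a x y = a y x)
    (hs_symm : ∀ x y : V, s x y = s y x)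
    (α : ℝ) (hα : 0 < α) (hcoer : ∀ v : V, α * ‖v‖ ^ 2 ≤ a v v)
    (hs_pos : ∀ v : V, 0 ≤ s v v)
    (F : V →ₗ[ℝ] ℝ)
    (W : Submodule ℝ V) (hW : ∀ v : V, v ∈ W ↔ s v v = 0)
    (uσ : ℝ → V)
    (huσ : ∀ σ : ℝ, 0 < σ → ∀ v : V, a (uσ σ) v + σ * s (uσ σ) v = F v)
    (uInf : V) (huInfW : uInf ∈ W)
    (huInf : ∀ w ∈ W, a uInf w = F w) :
    Tendsto uσ atTop (nhds uInf) :=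
  stmt8_general V a s hs_symm α hα hcoer hs_pos F W hW uσ huσ uInf huInfW huInf
end

section
/- In the setting of the previous abstract penalty problem (a coercive with coercivity constant α, s positive semidefinite with kernel W), the penalized solutions satisfy the quantitative bounds: s(u_σ, u_σ) ≤ C/σ and ‖u_σ - u_∞‖ ≤ C'/σ for constants C, C' independent of σ, where u_∞ ∈ W is the constrained solution. -/
/-!
The error `e = uσ - uInf` satisfies `a(e, v) + σ s(e, v) = G v` with `G = F - a(uInf, ·)`, and `G`
vanishes on `W`. Split `e = p + w` with `w ∈ W`, `p ∈ Wᗮ`. In finite dimension `s` is coercive on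
`Wᗮ` (compactness of the unit sphere), so testing with `e` gives `σ β ‖p‖ ≤ ‖G‖`; testing with `w`,
where both `s(e, ·)` and `G` vanish, gives `α ‖w‖ ≤ ‖a‖ ‖p‖`. The bound on `s(uσ, uσ)` comes from
testing with `uσ` itself: `σ s(uσ, uσ) ≤ ‖F‖ t - α t² ≤ ‖F‖² / (4α)` with `t = ‖uσ‖`.
-/

theorem exists_pos_mul_sq_norm_le_of_pos {E : Type*} [NormedAddCommGroup E] [NormedSpace ℝ E]
    [FiniteDimensional ℝ E] (B : E →ₗ[ℝ] E →ₗ[ℝ] ℝ) (hB : ∀ v, v ≠ 0 → 0 < B v v) :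
    ∃ β, 0 < β ∧ ∀ v, β * ‖v‖ ^ 2 ≤ B v v := by
  rcases subsingleton_or_nontrivial E with _ | _
  · exact ⟨1, one_pos, fun v => by simp [Subsingleton.elim v 0]⟩
  have hcont : Continuous fun v => B v v :=
    B.toContinuousBilinearMap.continuous₂.comp (continuous_id.prodMk continuous_id)
  obtain ⟨v₀, hv₀, hmin⟩ := (isCompact_sphere (0 : E) 1).exists_isMinOn
    (NormedSpace.sphere_nonempty.mpr zero_le_one) hcont.continuousOn
  rw [mem_sphere_zero_iff_norm] at hv₀
  refine ⟨B v₀ v₀, hB v₀ (ne_zero_of_norm_ne_zero (by simp [hv₀])), fun v => ?_⟩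
  rcases eq_or_ne v 0 with rfl | hv
  · simp
  have hnorm : 0 < ‖v‖ := norm_pos_iff.mpr hv
  have hv₀_le : B v₀ v₀ ≤ ‖v‖⁻¹ * (‖v‖⁻¹ * B v v) := by
    simpa using hmin (a := ‖v‖⁻¹ • v) (by simp [norm_smul, hnorm.ne'])
  calc B v₀ v₀ * ‖v‖ ^ 2 ≤ ‖v‖⁻¹ * (‖v‖⁻¹ * B v v) * ‖v‖ ^ 2 := by gcongr
    _ = B v v := by field_simp

theorem exists_pos_mul_sq_norm_le_of_mem_orthogonal {V : Type*} [NormedAddCommGroup V]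
    [InnerProductSpace ℝ V] [FiniteDimensional ℝ V] (s : V →ₗ[ℝ] V →ₗ[ℝ] ℝ)
    (hs : ∀ v, 0 ≤ s v v) {W : Submodule ℝ V} (hW : ∀ v, s v v = 0 → v ∈ W) :
    ∃ β, 0 < β ∧ ∀ p ∈ Wᗮ, β * ‖p‖ ^ 2 ≤ s p p := by
  have hpos : ∀ p : Wᗮ, p ≠ 0 → 0 < s.domRestrict₁₂ Wᗮ Wᗮ p p := by
    intro p hp
    refine (hs p).lt_of_ne fun h => hp ?_
    have hpW : (p : V) ∈ W ⊓ Wᗮ := ⟨hW p h.symm, p.2⟩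
    simpa [W.inf_orthogonal_eq_bot] using hpW
  obtain ⟨β, hβ, hβs⟩ := exists_pos_mul_sq_norm_le_of_pos _ hpos
  exact ⟨β, hβ, fun p hp => hβs ⟨p, hp⟩⟩

theorem mul_le_of_mul_sq_le {c x M : ℝ} (hx : 0 ≤ x) (hM : 0 ≤ M) (h : c * x ^ 2 ≤ M * x) :
    c * x ≤ M := by
  rcases hx.eq_or_lt with rfl | hx
  · simpa using hM
  · exact le_of_mul_le_mul_right (by linarith) hx

section PenaltyEstimates

variable {V : Type*} [NormedAddCommGroup V] [InnerProductSpace ℝ V]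
  {A S : V →L[ℝ] V →L[ℝ] ℝ} {α β σ : ℝ}

theorem mul_apply_self_le_of_penalized_eq {F : V →L[ℝ] ℝ} {u : V} (hα : 0 < α)
    (hA : ∀ v, α * ‖v‖ ^ 2 ≤ A v v) (hu : A u u + σ * S u u = F u) :
    σ * S u u ≤ ‖F‖ ^ 2 / (4 * α) := by
  have hF : F u ≤ ‖F‖ * ‖u‖ := (le_abs_self _).trans (F.le_opNorm u)
  rw [le_div_iff₀ (by positivity)]
  nlinarith [hA u, sq_nonneg (2 * α * ‖u‖ - ‖F‖)]

variable {W : Submodule ℝ V} [W.HasOrthogonalProjection] {G : V →L[ℝ] ℝ} {e : V}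

theorem mul_norm_sub_starProjection_le (hσ : 0 ≤ σ) (hA : 0 ≤ A e e)
    (hS_symm : ∀ x y, S x y = S y x) (hSW : ∀ w ∈ W, ∀ v, S w v = 0)
    (hS : ∀ p ∈ Wᗮ, β * ‖p‖ ^ 2 ≤ S p p) (hGW : ∀ w ∈ W, G w = 0)
    (he : A e e + σ * S e e = G e) :
    σ * β * ‖e - W.starProjection e‖ ≤ ‖G‖ := by
  set p := e - W.starProjection e
  set w := W.starProjection e
  have hw : w ∈ W := W.starProjection_apply_mem e
  have hsplit : e = p + w := (sub_add_cancel e w).symm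
  have hSe : S e e = S p p := by simp [hsplit, hS_symm p w, hSW w hw]
  have hGe : G e = G p := by rw [hsplit, map_add, hGW w hw, add_zero]
  rw [hSe, hGe] at he
  refine mul_le_of_mul_sq_le (norm_nonneg p) (norm_nonneg G) ?_
  calc σ * β * ‖p‖ ^ 2 = σ * (β * ‖p‖ ^ 2) := by ring
    _ ≤ σ * S p p := by gcongr; exact hS p (W.sub_starProjection_mem_orthogonal e)
    _ ≤ G p := by linarith
    _ ≤ ‖G‖ * ‖p‖ := (le_abs_self _).trans (G.le_opNorm p)

theorem mul_norm_starProjection_le (hA : ∀ v, α * ‖v‖ ^ 2 ≤ A v v)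
    (he : A e (W.starProjection e) = 0) :
    α * ‖W.starProjection e‖ ≤ ‖A‖ * ‖e - W.starProjection e‖ := by
  set p := e - W.starProjection e
  set w := W.starProjection e
  have hsplit : A p w + A w w = 0 := by
    rw [← he, ← add_apply, ← map_add, sub_add_cancel]
  refine mul_le_of_mul_sq_le (norm_nonneg w) (by positivity) ?_
  calc α * ‖w‖ ^ 2 ≤ A w w := hA w
    _ = - A p w := by linarith
    _ ≤ ‖A‖ * ‖p‖ * ‖w‖ := (neg_le_abs _).trans (A.le_opNorm₂ p w)

theorem norm_le_of_penalized_eq (hα : 0 < α) (hβ : 0 < β) (hσ : 0 < σ)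
    (hA : ∀ v, α * ‖v‖ ^ 2 ≤ A v v)
    (hS_symm : ∀ x y, S x y = S y x) (hSW : ∀ w ∈ W, ∀ v, S w v = 0)
    (hS : ∀ p ∈ Wᗮ, β * ‖p‖ ^ 2 ≤ S p p) (hGW : ∀ w ∈ W, G w = 0)
    (he : ∀ v, A e v + σ * S e v = G v) :
    ‖e‖ ≤ (1 + ‖A‖ / α) * ‖G‖ / (β * σ) := by
  set p := e - W.starProjection e
  set w := W.starProjection e
  have hw : w ∈ W := W.starProjection_apply_mem e
  have hp_le : ‖p‖ ≤ ‖G‖ / (β * σ) := by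
    have := mul_norm_sub_starProjection_le hσ.le ((mul_nonneg hα.le (sq_nonneg _)).trans (hA e))
      hS_symm hSW hS hGW (he e)
    rw [le_div_iff₀ (by positivity)]
    linarith
  have hw_le : α * ‖w‖ ≤ ‖A‖ * ‖p‖ := by
    refine mul_norm_starProjection_le hA ?_
    simpa [hS_symm e w, hSW w hw, hGW w hw] using he w
  calc ‖e‖ = ‖p + w‖ := by rw [sub_add_cancel]
    _ ≤ ‖p‖ + ‖w‖ := norm_add_le p w
    _ ≤ ‖p‖ + ‖A‖ / α * ‖p‖ := by
        gcongr
        rw [div_mul_eq_mul_div, le_div_iff₀ hα]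
        linarith
    _ = (1 + ‖A‖ / α) * ‖p‖ := by ring
    _ ≤ (1 + ‖A‖ / α) * (‖G‖ / (β * σ)) := by gcongr
    _ = (1 + ‖A‖ / α) * ‖G‖ / (β * σ) := by ring

end PenaltyEstimates

theorem stmt9_general (V : Type*) [NormedAddCommGroup V] [InnerProductSpace ℝ V]
    [FiniteDimensional ℝ V]
    (a s : V →ₗ[ℝ] V →ₗ[ℝ] ℝ)
    (hs_symm : ∀ x y : V, s x y = s y x)
    (α : ℝ) (hα : 0 < α) (hcoer : ∀ v : V, α * ‖v‖ ^ 2 ≤ a v v)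
    (hs_pos : ∀ v : V, 0 ≤ s v v)
    (F : V →ₗ[ℝ] ℝ)
    (W : Submodule ℝ V) (hW : ∀ v : V, v ∈ W ↔ s v v = 0)
    (uσ : ℝ → V)
    (huσ : ∀ σ : ℝ, 0 < σ → ∀ v : V, a (uσ σ) v + σ * s (uσ σ) v = F v)
    (uInf : V) (huInfW : uInf ∈ W)
    (huInf : ∀ w ∈ W, a uInf w = F w) :
    ∃ C C' : ℝ, ∀ σ : ℝ, 0 < σ →
      s (uσ σ) (uσ σ) ≤ C / σ ∧ ‖uσ σ - uInf‖ ≤ C' / σ := by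
  set A := a.toContinuousBilinearMap
  set S := s.toContinuousBilinearMap
  set G := (F - a uInf).toContinuousLinearMap
  have hs_ker : ∀ w ∈ W, ∀ v, s w v = 0 := fun w hw v => by
    rw [(LinearMap.BilinForm.apply_apply_same_eq_zero_iff s hs_pos ⟨hs_symm⟩).mp
      ((hW w).mp hw), LinearMap.zero_apply]
  obtain ⟨β, hβ, hsβ⟩ :=
    exists_pos_mul_sq_norm_le_of_mem_orthogonal s hs_pos fun v => (hW v).mpr
  refine ⟨‖F.toContinuousLinearMap‖ ^ 2 / (4 * α), (1 + ‖A‖ / α) * ‖G‖ / β,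
    fun σ hσ => ⟨?_, ?_⟩⟩
  · rw [le_div_iff₀ hσ, mul_comm]
    exact mul_apply_self_le_of_penalized_eq (A := A) (S := S) hα hcoer (huσ σ hσ _)
  · rw [div_div]
    refine norm_le_of_penalized_eq (A := A) (S := S) (W := W) hα hβ hσ hcoer hs_symm hs_ker hsβ
      ?_ ?_
    · intro w hw
      simp [G, huInf w hw]
    · intro v
      simp only [map_sub, sub_apply, LinearMap.toContinuousBilinearMap_apply,
        LinearMap.coe_toContinuousLinearMap', hs_ker uInf huInfW, sub_zero, ← huσ σ hσ v, A, S, G]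
      ring

/-- Quantitative rate in the super-penalization limit (Theorem 1 of the paper):
with `a` a symmetric coercive bilinear form (coercivity constant `α`), `s` a
symmetric positive semidefinite penalty form with kernel `W`, `uσ σ` the
penalized solution and `uInf ∈ W` the constrained solution, there are constants
`C, C'` independent of `σ` with `s(uσ,uσ) ≤ C/σ` and `‖uσ - uInf‖ ≤ C'/σ`. -/
theorem stmt9 (V : Type*) [NormedAddCommGroup V] [InnerProductSpace ℝ V]
    [FiniteDimensional ℝ V]
    (a s : V →ₗ[ℝ] V →ₗ[ℝ] ℝ)
    (ha_symm : ∀ x y : V, a x y = a y x)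
    (hs_symm : ∀ x y : V, s x y = s y x)
    (α : ℝ) (hα : 0 < α) (hcoer : ∀ v : V, α * ‖v‖ ^ 2 ≤ a v v)
    (hs_pos : ∀ v : V, 0 ≤ s v v)
    (F : V →ₗ[ℝ] ℝ)
    (W : Submodule ℝ V) (hW : ∀ v : V, v ∈ W ↔ s v v = 0)
    (uσ : ℝ → V)
    (huσ : ∀ σ : ℝ, 0 < σ → ∀ v : V, a (uσ σ) v + σ * s (uσ σ) v = F v)
    (uInf : V) (huInfW : uInf ∈ W)
    (huInf : ∀ w ∈ W, a uInf w = F w) :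
    ∃ C C' : ℝ, ∀ σ : ℝ, 0 < σ →
      s (uσ σ) (uσ σ) ≤ C / σ ∧ ‖uσ σ - uInf‖ ≤ C' / σ :=
  stmt9_general V a s hs_symm α hα hcoer hs_pos F W hW uσ huσ uInf huInfW huInf
end
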